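/- arXiv:2605.18809 — 7 statements merged into one kernel-verified Lean document; each statement's English description precedes it below -/
import Mathlib

section
/- Let U ⊆ E be an open set that is simply connected (in particular path-connected) as a topological subspace, and let F : E → E be continuously differentiable on U with symmetric Jacobian at every point of U, i.e. ⟨DF(x)u, v⟩ = ⟨DF(x)v, u⟩ for all x ∈ U and u, v ∈ E. Then there exists a differentiable function φ : U → ℝ with ∇φ(x) = F(x) for all x ∈ U, and φ is unique up to an additive constant: any two such potentials differ by a constant on U. -/
/-!
Every point of `U` has a convex neighbourhood on which the form `⟪F ·, ·⟫` has a primitive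
(Poincaré lemma for convex sets). These local primitives can be continued along a continuous
path `g : [0, 1] → U`: a primitive along `g` is a function `h` on `[0, 1]` that near each `t`
differs from `f ∘ g`, for a local primitive `f` near `g t`, by a constant. It is unique up to a
constant, so `h 1 - h 0` is a well-defined integral of the form along `g`. Two paths that lie
pointwise in common convex charts and share their endpoints have the same integral, and by a
Lebesgue-number argument nearby paths of a homotopy are of this kind; the same argument, applied
to the contraction of a path to its starting point, shows that primitives along paths exist. Hence
the integral is invariant under homotopies rel endpoints, on a simply connected `U` it depends
only on the endpoints, and integrating from a base point gives the potential. Uniqueness up to a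
constant holds because `U` is connected.
-/

open RealInnerProductSpace

open Set Filter Metric Topology unitInterval

section Primitives

variable {E F : Type*} [NormedAddCommGroup E] [NormedSpace ℝ E] [NormedAddCommGroup F]
  [NormedSpace ℝ F] {ω : E → E →L[ℝ] F}

def IsExactOn (ω : E → E →L[ℝ] F) (V : Set E) : Prop :=
  ∃ f : E → F, ∀ y ∈ V, HasFDerivAt f (ω y) y

def IsLocallyExactOn (ω : E → E →L[ℝ] F) (U : Set E) : Prop :=
  ∀ x ∈ U, ∃ V ⊆ U, IsOpen V ∧ Convex ℝ V ∧ x ∈ V ∧ IsExactOn ω V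

theorem Convex.sub_eq_sub_of_hasFDerivAt {V : Set E} (hV : Convex ℝ V) {f₁ f₂ : E → F}
    (hf₁ : ∀ y ∈ V, HasFDerivAt f₁ (ω y) y) (hf₂ : ∀ y ∈ V, HasFDerivAt f₂ (ω y) y)
    {x y : E} (hx : x ∈ V) (hy : y ∈ V) : f₁ x - f₁ y = f₂ x - f₂ y := by
  have hzero : ∀ z ∈ V, HasFDerivWithinAt (f₁ - f₂) (0 : E →L[ℝ] F) V z := fun z hz => by
    simpa using ((hf₁ z hz).sub (hf₂ z hz)).hasFDerivWithinAt
  have := hV.norm_image_sub_le_of_norm_hasFDerivWithin_le hzero (C := 0) (by simp) hy hx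
  rwa [zero_mul, norm_le_zero_iff, Pi.sub_apply, Pi.sub_apply, sub_eq_zero,
    sub_eq_sub_iff_sub_eq_sub] at this

theorem eventually_sub_eq_sub_of_hasFDerivAt {x : E} {f₁ f₂ : E → F}
    (hf₁ : ∀ᶠ y in 𝓝 x, HasFDerivAt f₁ (ω y) y) (hf₂ : ∀ᶠ y in 𝓝 x, HasFDerivAt f₂ (ω y) y) :
    ∀ᶠ y in 𝓝 x, f₁ y - f₁ x = f₂ y - f₂ x := by
  obtain ⟨ε, hε, hball⟩ := Metric.eventually_nhds_iff_ball.1 (hf₁.and hf₂)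
  filter_upwards [ball_mem_nhds x hε] with y hy
  exact (convex_ball x ε).sub_eq_sub_of_hasFDerivAt (fun z hz => (hball z hz).1)
    (fun z hz => (hball z hz).2) hy (mem_ball_self hε)

variable {X : Type*} [TopologicalSpace X]

def IsPrimitiveAlong (ω : E → E →L[ℝ] F) (g : X → E) (h : X → F) : Prop :=
  ∀ t, ∃ f : E → F, (∀ᶠ y in 𝓝 (g t), HasFDerivAt f (ω y) y) ∧
    ∀ᶠ s in 𝓝 t, h s - h t = f (g s) - f (g t)

namespace IsPrimitiveAlong

variable {g g' : X → E} {h h₁ h₂ : X → F}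

theorem eventually_sub_eq_sub (hh : IsPrimitiveAlong ω g h) {t : X} (hg : ContinuousAt g t)
    {f : E → F} (hf : ∀ᶠ y in 𝓝 (g t), HasFDerivAt f (ω y) y) :
    ∀ᶠ s in 𝓝 t, h s - h t = f (g s) - f (g t) := by
  obtain ⟨f₀, hf₀, hhf₀⟩ := hh t
  filter_upwards [hhf₀, hg.eventually (eventually_sub_eq_sub_of_hasFDerivAt hf₀ hf)]
    with s hhs hfs
  rw [hhs, hfs]

theorem sub_eq_sub [PreconnectedSpace X] (hg : Continuous g) (hh₁ : IsPrimitiveAlong ω g h₁)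
    (hh₂ : IsPrimitiveAlong ω g h₂) (s t : X) : h₁ s - h₁ t = h₂ s - h₂ t := by
  have hconst : IsLocallyConstant (h₁ - h₂) := by
    refine (IsLocallyConstant.iff_eventually_eq _).2 fun t => ?_
    obtain ⟨f, hf, hh₁f⟩ := hh₁ t
    filter_upwards [hh₁f, hh₂.eventually_sub_eq_sub hg.continuousAt hf] with s hs₁ hs₂
    rw [Pi.sub_apply, Pi.sub_apply, sub_eq_sub_iff_sub_eq_sub, hs₁, hs₂]
  rw [← sub_eq_sub_iff_sub_eq_sub]
  exact hconst.apply_eq_of_preconnectedSpace s t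

theorem exists_of_forall_exists_convex (hh : IsPrimitiveAlong ω g h) (hg : Continuous g)
    (hg' : Continuous g')
    (hV : ∀ t, ∃ V, IsOpen V ∧ Convex ℝ V ∧ g t ∈ V ∧ g' t ∈ V ∧ IsExactOn ω V) :
    ∃ h', IsPrimitiveAlong ω g' h' ∧ ∀ t (W : Set E) (k : E → F), Convex ℝ W → g t ∈ W →
      g' t ∈ W → (∀ y ∈ W, HasFDerivAt k (ω y) y) → h' t - h t = k (g' t) - k (g t) := by
  choose V hVo hVc hgV hg'V f hf using hV
  have hf_eq : ∀ t (W : Set E) (k : E → F), Convex ℝ W → g t ∈ W → g' t ∈ W →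
      (∀ y ∈ W, HasFDerivAt k (ω y) y) → f t (g' t) - f t (g t) = k (g' t) - k (g t) :=
    fun t W k hW hgW hg'W hk => ((hVc t).inter hW).sub_eq_sub_of_hasFDerivAt
      (fun y hy => hf t y hy.1) (fun y hy => hk y hy.2) ⟨hg'V t, hg'W⟩ ⟨hgV t, hgW⟩
  refine ⟨fun t => h t + (f t (g' t) - f t (g t)), fun t₀ => ⟨f t₀, ?_, ?_⟩,
    fun t W k hW hgW hg'W hk => by rw [add_sub_cancel_left, hf_eq t W k hW hgW hg'W hk]⟩
  · filter_upwards [(hVo t₀).mem_nhds (hg'V t₀)] using hf t₀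
  · have hV₀ : ∀ᶠ y in 𝓝 (g t₀), y ∈ V t₀ := (hVo t₀).mem_nhds (hgV t₀)
    filter_upwards [hg.continuousAt hV₀, hg'.continuousAt ((hVo t₀).mem_nhds (hg'V t₀)),
      hh.eventually_sub_eq_sub hg.continuousAt (hV₀.mono (hf t₀))] with s hs hs' hhs
    rw [hf_eq s (V t₀) (f t₀) (hVc t₀) hs hs' (hf t₀)]
    linear_combination (norm := abel) hhs

end IsPrimitiveAlong

-- Junk value `0` when `g` admits no primitive along it.
open Classical in
noncomputable def integralAlong (ω : E → E →L[ℝ] F) (g : I → E) : F :=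
  if hex : ∃ h, IsPrimitiveAlong ω g h then hex.choose 1 - hex.choose 0 else 0

theorem IsPrimitiveAlong.integralAlong_eq {g : I → E} {h : I → F} (hh : IsPrimitiveAlong ω g h)
    (hg : Continuous g) : integralAlong ω g = h 1 - h 0 := by
  have hex : ∃ h, IsPrimitiveAlong ω g h := ⟨h, hh⟩
  rw [integralAlong, dif_pos hex]
  exact hex.choose_spec.sub_eq_sub hg hh 1 0

namespace IsLocallyExactOn

variable {U : Set E}

theorem lebesgue_number_lemma (hω : IsLocallyExactOn ω U) {Y : Type*} [PseudoMetricSpace Y]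
    [CompactSpace Y] {H : Y → E} (hH : Continuous H) (hHU : ∀ p, H p ∈ U) :
    ∃ δ > 0, ∀ p q, dist p q < δ →
      ∃ V, IsOpen V ∧ Convex ℝ V ∧ H p ∈ V ∧ H q ∈ V ∧ IsExactOn ω V := by
  choose V _ hVo hVc hmem hex using fun p => hω (H p) (hHU p)
  obtain ⟨δ, hδ, hball⟩ := lebesgue_number_lemma_of_metric (c := fun p => H ⁻¹' V p)
    isCompact_univ (fun p => (hVo p).preimage hH) fun p _ => mem_iUnion.2 ⟨p, hmem p⟩
  refine ⟨δ, hδ, fun p q hpq => ?_⟩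
  obtain ⟨r, hr⟩ := hball p (mem_univ p)
  exact ⟨V r, hVo r, hVc r, hr (mem_ball_self hδ), hr (mem_ball'.2 hpq), hex r⟩

section Homotopy

variable (hω : IsLocallyExactOn ω U) {H : I × I → E} (hH : Continuous H) (hHU : ∀ p, H p ∈ U)
include hω hH hHU

theorem exists_pos_forall_exists_isPrimitiveAlong :
    ∃ δ > 0, ∀ s s' : I, dist s s' < δ → ∀ h, IsPrimitiveAlong ω (fun t => H (s, t)) h →
      ∃ h', IsPrimitiveAlong ω (fun t => H (s', t)) h' ∧ ∀ t, H (s', t) = H (s, t) → h' t = h t := by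
  obtain ⟨δ, hδ, hV⟩ := hω.lebesgue_number_lemma hH hHU
  refine ⟨δ, hδ, fun s s' hss' h hh => ?_⟩
  have hclose (t : I) := hV (s, t) (s', t) (by simpa [Prod.dist_eq] using hss')
  obtain ⟨h', hh', hinc⟩ := hh.exists_of_forall_exists_convex (by fun_prop) (by fun_prop) hclose
  refine ⟨h', hh', fun t ht => ?_⟩
  obtain ⟨W, -, hWc, hsW, hs'W, k, hk⟩ := hclose t
  rw [← sub_eq_zero, hinc t W k hWc hsW hs'W hk, ht, sub_self]

theorem exists_isPrimitiveAlong_of_homotopy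
    (h₀ : ∃ h, IsPrimitiveAlong ω (fun t => H (0, t)) h) (s : I) :
    ∃ h, IsPrimitiveAlong ω (fun t => H (s, t)) h := by
  obtain ⟨δ, hδ, hnear⟩ := exists_pos_forall_exists_isPrimitiveAlong hω hH hHU
  have hconst : IsLocallyConstant fun s : I => ∃ h, IsPrimitiveAlong ω (fun t => H (s, t)) h := by
    refine (IsLocallyConstant.iff_eventually_eq _).2 fun s => ?_
    filter_upwards [ball_mem_nhds s hδ] with s' hs'
    exact propext ⟨fun ⟨h, hh⟩ => (hnear s' s hs' h hh).imp fun _ => And.left,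
      fun ⟨h, hh⟩ => (hnear s s' (mem_ball'.1 hs') h hh).imp fun _ => And.left⟩
  rwa [hconst.apply_eq_of_preconnectedSpace s 0]

theorem integralAlong_eq_of_homotopy (h₀ : ∃ h, IsPrimitiveAlong ω (fun t => H (0, t)) h)
    (hsrc : ∀ s, H (s, 0) = H (0, 0)) (htgt : ∀ s, H (s, 1) = H (0, 1)) (s : I) :
    integralAlong ω (fun t => H (s, t)) = integralAlong ω (fun t => H (0, t)) := by
  obtain ⟨δ, hδ, hnear⟩ := exists_pos_forall_exists_isPrimitiveAlong hω hH hHU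
  have hconst : IsLocallyConstant fun s : I => integralAlong ω (fun t => H (s, t)) := by
    refine (IsLocallyConstant.iff_eventually_eq _).2 fun s => ?_
    obtain ⟨h, hh⟩ := exists_isPrimitiveAlong_of_homotopy hω hH hHU h₀ s
    filter_upwards [ball_mem_nhds s hδ] with s' hs'
    obtain ⟨h', hh', hends⟩ := hnear s s' (mem_ball'.1 hs') h hh
    rw [hh.integralAlong_eq (by fun_prop), hh'.integralAlong_eq (by fun_prop),
      hends 0 ((hsrc s').trans (hsrc s).symm), hends 1 ((htgt s').trans (htgt s).symm)]
  exact hconst.apply_eq_of_preconnectedSpace s 0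

end Homotopy

theorem exists_isPrimitiveAlong (hω : IsLocallyExactOn ω U) {g : I → E} (hg : Continuous g)
    (hgU : ∀ t, g t ∈ U) : ∃ h, IsPrimitiveAlong ω g h := by
  obtain ⟨V, -, hVo, -, hV, f, hf⟩ := hω (g 0) (hgU 0)
  -- Deform the constant path at `g 0` into `g` through the initial segments `t ↦ g (s * t)`.
  have hconst : IsPrimitiveAlong ω (fun t : I => g (0 * t)) 0 := fun _ =>
    ⟨f, by simpa using eventually_of_mem (hVo.mem_nhds hV) hf, by simp⟩
  simpa using hω.exists_isPrimitiveAlong_of_homotopy (H := fun p => g (p.1 * p.2))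
    (by fun_prop) (fun p => hgU _) ⟨0, hconst⟩ 1

theorem integralAlong_eq_of_homotopic (hω : IsLocallyExactOn ω U) {x y : U} {p q : Path x y}
    (hpq : p.Homotopic q) :
    integralAlong ω (fun t => (p t : E)) = integralAlong ω (fun t => (q t : E)) := by
  obtain ⟨G⟩ := hpq
  have hp : ∃ h, IsPrimitiveAlong ω (fun t => (p t : E)) h :=
    hω.exists_isPrimitiveAlong (by fun_prop) fun t => (p t).2
  simpa using (hω.integralAlong_eq_of_homotopy (H := fun st => (G st : E)) (by fun_prop)
    (fun st => (G st).2) (by simpa using hp) (by simp) (by simp) 1).symm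

theorem integralAlong_sub_integralAlong (hω : IsLocallyExactOn ω U) {g g' : I → E}
    (hg : Continuous g) (hg' : Continuous g') (hgU : ∀ t, g t ∈ U)
    (hclose : ∀ t, ∃ W, IsOpen W ∧ Convex ℝ W ∧ g t ∈ W ∧ g' t ∈ W ∧ IsExactOn ω W)
    (h₀ : g' 0 = g 0) {V : Set E} (hV : Convex ℝ V) {f : E → F}
    (hf : ∀ z ∈ V, HasFDerivAt f (ω z) z) (h₁ : g 1 ∈ V) (h₁' : g' 1 ∈ V) :
    integralAlong ω g' - integralAlong ω g = f (g' 1) - f (g 1) := by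
  obtain ⟨h, hh⟩ := hω.exists_isPrimitiveAlong hg hgU
  obtain ⟨h', hh', hinc⟩ := hh.exists_of_forall_exists_convex hg hg' hclose
  obtain ⟨W, -, hWc, hW, hW', k, hk⟩ := hclose 0
  rw [hh.integralAlong_eq hg, hh'.integralAlong_eq hg', sub_sub_sub_comm,
    hinc 0 W k hWc hW hW' hk, h₀, sub_self, sub_zero, hinc 1 V f hV h₁ h₁' hf]

theorem integralAlong_trans_sub_integralAlong_trans (hω : IsLocallyExactOn ω U) {x₀ x y y' : U}
    (p : Path x₀ x) {q : Path x y} {q' : Path x y'} {V : Set E} (hVo : IsOpen V)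
    (hVc : Convex ℝ V) {f : E → F} (hf : ∀ z ∈ V, HasFDerivAt f (ω z) z)
    (hq : ∀ t, (q t : E) ∈ V) (hq' : ∀ t, (q' t : E) ∈ V) :
    integralAlong ω (fun t => ((p.trans q) t : E)) -
      integralAlong ω (fun t => ((p.trans q') t : E)) = f y - f y' := by
  have hclose (t : I) : ∃ W, IsOpen W ∧ Convex ℝ W ∧ ((p.trans q') t : E) ∈ W ∧
      ((p.trans q) t : E) ∈ W ∧ IsExactOn ω W := by
    simp only [Path.trans_apply]
    split_ifs
    · obtain ⟨W, -, hWo, hWc, hW, hWω⟩ := hω _ (p _).2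
      exact ⟨W, hWo, hWc, hW, hW, hWω⟩
    · exact ⟨V, hVo, hVc, hq' _, hq _, f, hf⟩
  simpa using hω.integralAlong_sub_integralAlong (by fun_prop) (by fun_prop) (fun t => (_ : U).2)
    hclose (by simp) hVc hf (by simpa using hq' 1) (by simpa using hq 1)

theorem exists_hasFDerivAt [SimplyConnectedSpace U] (hω : IsLocallyExactOn ω U) :
    ∃ φ : E → F, ∀ x ∈ U, HasFDerivAt φ (ω x) x := by
  classical
  obtain ⟨x₀⟩ : Nonempty U := inferInstance
  let φ : E → F := fun x => if hx : x ∈ U then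
    integralAlong ω (fun t => (PathConnectedSpace.somePath x₀ ⟨x, hx⟩ t : E)) else 0
  have hφ {x : U} (p : Path x₀ x) : φ x = integralAlong ω (fun t => (p t : E)) := by
    simp only [φ, dif_pos x.2]
    exact hω.integralAlong_eq_of_homotopic (SimplyConnectedSpace.paths_homotopic _ _)
  refine ⟨φ, fun x hx => ?_⟩
  obtain ⟨V, hVU, hVo, hVc, hxV, f, hf⟩ := hω x hx
  have hloc : ∀ y ∈ V, φ y = f y + (φ x - f x) := fun y hy => by
    let qV : Path (⟨x, hxV⟩ : V) ⟨y, hy⟩ :=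
      ((hVc.isPathConnected ⟨x, hxV⟩).joinedIn x hxV y hy).joined_subtype.somePath
    have := hω.integralAlong_trans_sub_integralAlong_trans (PathConnectedSpace.somePath x₀ _)
      hVo hVc hf (q := qV.map (continuous_inclusion hVU)) (q' := .refl _) (fun t => (qV t).2)
      fun _ => hxV
    rw [← hφ, ← hφ] at this
    exact eq_add_of_sub_eq' (sub_eq_sub_iff_sub_eq_sub.1 this)
  exact ((hf x hxV).add_const _).congr_of_eventuallyEq
    (eventually_of_mem (hVo.mem_nhds hxV) hloc)

end IsLocallyExactOn

theorem IsOpen.isLocallyExactOn_of_fderiv_symmetric [CompleteSpace F] {U : Set E} (hU : IsOpen U)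
    (hω : DifferentiableOn ℝ ω U) (hdω : ∀ a ∈ U, ∀ x y, fderiv ℝ ω a x y = fderiv ℝ ω a y x) :
    IsLocallyExactOn ω U := by
  intro x hx
  obtain ⟨r, hr, hrU⟩ := Metric.isOpen_iff.1 hU x hx
  exact ⟨ball x r, hrU, isOpen_ball, convex_ball x r, mem_ball_self hr,
    (convex_ball x r).exists_forall_hasFDerivAt_of_fderiv_symmetric isOpen_ball (hω.mono hrU)
      fun a ha => hdω a (hrU ha)⟩

end Primitives

theorem stmt_2_general {d : ℕ} (U : Set (EuclideanSpace ℝ (Fin d))) (hU : IsOpen U)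
    (hSC : SimplyConnectedSpace U)
    (F : EuclideanSpace ℝ (Fin d) → EuclideanSpace ℝ (Fin d))
    (hF : ContDiffOn ℝ 1 F U)
    (hsymm : ∀ x ∈ U, ∀ u v : EuclideanSpace ℝ (Fin d),
      ⟪fderiv ℝ F x u, v⟫ = ⟪fderiv ℝ F x v, u⟫) :
    (∃ φ : EuclideanSpace ℝ (Fin d) → ℝ, ∀ x ∈ U, HasGradientAt φ (F x) x) ∧
    (∀ φ₁ φ₂ : EuclideanSpace ℝ (Fin d) → ℝ,
      (∀ x ∈ U, HasGradientAt φ₁ (F x) x) → (∀ x ∈ U, HasGradientAt φ₂ (F x) x) →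
      ∃ c : ℝ, ∀ x ∈ U, φ₁ x = φ₂ x + c) := by
  let ω : EuclideanSpace ℝ (Fin d) → _ := fun x => innerSL ℝ (F x)
  have hgrad {φ} {x} : HasGradientAt φ (F x) x ↔ HasFDerivAt φ (ω x) x := by
    rw [hasGradientAt_iff_hasFDerivAt]; rfl
  have hF' : DifferentiableOn ℝ F U := hF.differentiableOn one_ne_zero
  have hdω : ∀ x ∈ U, HasFDerivAt ω ((innerSL ℝ).comp (fderiv ℝ F x)) x := fun x hx =>
    (innerSL ℝ).hasFDerivAt.comp x (hF'.differentiableAt (hU.mem_nhds hx)).hasFDerivAt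
  have hω : IsLocallyExactOn ω U := hU.isLocallyExactOn_of_fderiv_symmetric
    (fun x hx => (hdω x hx).differentiableAt.differentiableWithinAt)
    fun x hx u v => by simpa [(hdω x hx).fderiv] using hsymm x hx u v
  refine ⟨(hω.exists_hasFDerivAt).imp fun φ hφ x hx => hgrad.2 (hφ x hx), fun φ₁ φ₂ h₁ h₂ => ?_⟩
  have hdiff {φ} (hφ : ∀ x ∈ U, HasGradientAt φ (F x) x) : DifferentiableOn ℝ φ U :=
    fun x hx => (hgrad.1 (hφ x hx)).differentiableAt.differentiableWithinAt
  exact hU.exists_eq_add_of_fderiv_eq (isPreconnected_iff_preconnectedSpace.2 inferInstance)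
    (hdiff h₁) (hdiff h₂) fun x hx => by rw [(hgrad.1 (h₁ x hx)).fderiv, (hgrad.1 (h₂ x hx)).fderiv]

/-- On an open simply connected set `U`, a `C¹` vector field `F` with symmetric Jacobian
admits a potential `φ` with `∇φ = F` on `U`, unique up to an additive constant. -/
theorem stmt_2 {d : ℕ} (U : Set (EuclideanSpace ℝ (Fin d))) (hU : IsOpen U)
    (hpc : IsPathConnected U) (hSC : SimplyConnectedSpace U)
    (F : EuclideanSpace ℝ (Fin d) → EuclideanSpace ℝ (Fin d))
    (hF : ContDiffOn ℝ 1 F U)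
    (hsymm : ∀ x ∈ U, ∀ u v : EuclideanSpace ℝ (Fin d),
      ⟪fderiv ℝ F x u, v⟫ = ⟪fderiv ℝ F x v, u⟫) :
    (∃ φ : EuclideanSpace ℝ (Fin d) → ℝ, ∀ x ∈ U, HasGradientAt φ (F x) x) ∧
    (∀ φ₁ φ₂ : EuclideanSpace ℝ (Fin d) → ℝ,
      (∀ x ∈ U, HasGradientAt φ₁ (F x) x) → (∀ x ∈ U, HasGradientAt φ₂ (F x) x) →
      ∃ c : ℝ, ∀ x ∈ U, φ₁ x = φ₂ x + c) :=
  stmt_2_general U hU hSC F hF hsymm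
end

section
/- Let Φ⋆ ∈ S be a minimizer of J over S, set G⋆(x) := ∇_MΦ⋆(x) and R(x) := F(x) − G⋆(x). Then the Pythagorean identity holds: ∫ ‖F(x)‖_M² dμ(x) = ∫ ‖G⋆(x)‖_M² dμ(x) + ∫ ‖R(x)‖_M² dμ(x). -/
/-!
Scaling the minimizer keeps it in `S`, and `F - ∇_M((1 - t) Φ⋆) = R + t G⋆`, so
`t ↦ J((1 - t) Φ⋆) = J(Φ⋆) + t c + t² ∫ ‖G⋆‖_M²` is a quadratic minimized at `t = 0`, where
`c = ∫ (⟨R, M G⋆⟩ + ⟨G⋆, M R⟩) dμ`. Its discriminant `c²` is therefore `≤ 0`, so `c = 0`, and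
expanding `‖R + G⋆‖_M²` gives the identity.
-/

open RealInnerProductSpace MeasureTheory

section QuadraticForm

variable {α E : Type*} [MeasurableSpace α] {μ : Measure α}
  [NormedAddCommGroup E] [InnerProductSpace ℝ E] (A : E →L[ℝ] E) {u v : α → E}

theorem integrable_inner_apply_of_memLp_two (hu : MemLp u 2 μ) (hv : MemLp v 2 μ) :
    Integrable (fun x => ⟪u x, A (v x)⟫) μ :=
  memLp_one_iff_integrable.1 <| (innerSL ℝ).memLp_of_bilin 1 hu (A.comp_memLp' hv)

theorem inner_apply_add_smul (a b : E) (t : ℝ) :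
    ⟪a + t • b, A (a + t • b)⟫ = ⟪a, A a⟫ + t * (⟪a, A b⟫ + ⟪b, A a⟫) + t ^ 2 * ⟪b, A b⟫ := by
  simp only [map_add, map_smul, inner_add_left, inner_add_right, real_inner_smul_left,
    real_inner_smul_right]
  ring

theorem integral_inner_apply_add_smul (hu : MemLp u 2 μ) (hv : MemLp v 2 μ) (t : ℝ) :
    ∫ x, ⟪u x + t • v x, A (u x + t • v x)⟫ ∂μ =
      ∫ x, ⟪u x, A (u x)⟫ ∂μ + t * ∫ x, ⟪u x, A (v x)⟫ + ⟪v x, A (u x)⟫ ∂μ +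
        t ^ 2 * ∫ x, ⟪v x, A (v x)⟫ ∂μ := by
  have huu := integrable_inner_apply_of_memLp_two A hu hu
  have hcross : Integrable (fun x => ⟪u x, A (v x)⟫ + ⟪v x, A (u x)⟫) μ :=
    (integrable_inner_apply_of_memLp_two A hu hv).add (integrable_inner_apply_of_memLp_two A hv hu)
  have hvv := integrable_inner_apply_of_memLp_two A hv hv
  simp only [inner_apply_add_smul]
  rw [integral_add ?_ (hvv.const_mul _), integral_add huu (hcross.const_mul t),
    integral_const_mul, integral_const_mul]
  exact huu.add (hcross.const_mul t)

theorem eq_zero_of_forall_nonneg_quadratic {a b : ℝ} (h : ∀ t : ℝ, 0 ≤ b * t + a * t ^ 2) :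
    b = 0 := by
  have hdisc := discrim_le_zero (a := a) (b := b) (c := 0) fun t => by linarith [h t]
  rw [discrim] at hdisc
  nlinarith [sq_nonneg b]

theorem integral_inner_apply_add_of_forall_le (hu : MemLp u 2 μ) (hv : MemLp v 2 μ)
    (hmin : ∀ t : ℝ, ∫ x, ⟪u x, A (u x)⟫ ∂μ ≤ ∫ x, ⟪u x + t • v x, A (u x + t • v x)⟫ ∂μ) :
    ∫ x, ⟪u x + v x, A (u x + v x)⟫ ∂μ =
      ∫ x, ⟪u x, A (u x)⟫ ∂μ + ∫ x, ⟪v x, A (v x)⟫ ∂μ := by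
  have hcross : ∫ x, ⟪u x, A (v x)⟫ + ⟪v x, A (u x)⟫ ∂μ = 0 :=
    eq_zero_of_forall_nonneg_quadratic (a := ∫ x, ⟪v x, A (v x)⟫ ∂μ) fun t => by
      linarith [hmin t, integral_inner_apply_add_smul A hu hv t]
  simpa [hcross] using integral_inner_apply_add_smul A hu hv 1

end QuadraticForm

theorem gradient_const_smul {E : Type*} [NormedAddCommGroup E] [InnerProductSpace ℝ E]
    [CompleteSpace E] {Φ : E → ℝ} {x : E} (hΦ : DifferentiableAt ℝ Φ x) (c : ℝ) :
    gradient (c • Φ) x = c • gradient Φ x := by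
  simp [gradient, fderiv_const_smul hΦ]

section Potentials

variable {E : Type*} [NormedAddCommGroup E] [InnerProductSpace ℝ E] [FiniteDimensional ℝ E]
  [MeasurableSpace E] [BorelSpace E]

def finiteEnergyPotentials (μ : Measure E) : Set (E → ℝ) :=
  {Φ | Differentiable ℝ Φ ∧ Measurable (fun x => gradient Φ x) ∧
    Integrable (fun x => ‖gradient Φ x‖ ^ 2) μ}

theorem memLp_gradient {μ : Measure E} {Φ : E → ℝ} (hΦ : Φ ∈ finiteEnergyPotentials μ) :
    MemLp (gradient Φ) 2 μ :=
  (memLp_two_iff_integrable_sq_norm hΦ.2.1.aestronglyMeasurable).2 hΦ.2.2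

theorem const_smul_mem_finiteEnergyPotentials {μ : Measure E} {Φ : E → ℝ}
    (hΦ : Φ ∈ finiteEnergyPotentials μ) (c : ℝ) : c • Φ ∈ finiteEnergyPotentials μ := by
  have hgrad : gradient (c • Φ) = c • gradient Φ :=
    funext fun x => gradient_const_smul (hΦ.1 x) c
  refine ⟨hΦ.1.const_smul c, ?_, ?_⟩
  · simpa only [hgrad] using hΦ.2.1.const_smul c
  · rw [hgrad, ← memLp_two_iff_integrable_sq_norm (hΦ.2.1.const_smul c).aestronglyMeasurable]
    exact (memLp_gradient hΦ).const_smul c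

end Potentials

theorem stmt_4_general {d : ℕ}
    (M : Matrix (Fin d) (Fin d) ℝ)
    (μ : Measure (EuclideanSpace ℝ (Fin d)))
    (F : EuclideanSpace ℝ (Fin d) → EuclideanSpace ℝ (Fin d))
    (hFmeas : Measurable F) (hFint : Integrable (fun x => ‖F x‖ ^ 2) μ)
    (S : Set (EuclideanSpace ℝ (Fin d) → ℝ))
    (hS : S = {Φ | Differentiable ℝ Φ ∧ Measurable (fun x => gradient Φ x) ∧
      Integrable (fun x => ‖gradient Φ x‖ ^ 2) μ})
    (J : (EuclideanSpace ℝ (Fin d) → ℝ) → ℝ)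
    (hJ : J = fun Φ =>
      ∫ x, ⟪F x - Matrix.toEuclideanLin M⁻¹ (gradient Φ x),
        Matrix.toEuclideanLin M (F x - Matrix.toEuclideanLin M⁻¹ (gradient Φ x))⟫ ∂μ)
    (Φstar : EuclideanSpace ℝ (Fin d) → ℝ) (hΦstar : Φstar ∈ S)
    (hmin : ∀ Φ ∈ S, J Φstar ≤ J Φ)
    (Gstar R : EuclideanSpace ℝ (Fin d) → EuclideanSpace ℝ (Fin d))
    (hG : ∀ x, Gstar x = Matrix.toEuclideanLin M⁻¹ (gradient Φstar x))
    (hR : ∀ x, R x = F x - Gstar x) :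
    ∫ x, ⟪F x, Matrix.toEuclideanLin M (F x)⟫ ∂μ =
      (∫ x, ⟪Gstar x, Matrix.toEuclideanLin M (Gstar x)⟫ ∂μ) +
      ∫ x, ⟪R x, Matrix.toEuclideanLin M (R x)⟫ ∂μ := by
  subst hS hJ
  change Φstar ∈ finiteEnergyPotentials μ at hΦstar
  have hGL2 : MemLp Gstar 2 μ := by
    rw [funext hG]
    exact (LinearMap.toContinuousLinearMap (Matrix.toEuclideanLin M⁻¹)).comp_memLp'
      (memLp_gradient hΦstar)
  have hRL2 : MemLp R 2 μ := by
    rw [funext hR]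
    exact ((memLp_two_iff_integrable_sq_norm hFmeas.aestronglyMeasurable).2 hFint).sub hGL2
  have hvar : ∀ t : ℝ, ∫ x, ⟪R x, Matrix.toEuclideanLin M (R x)⟫ ∂μ ≤
      ∫ x, ⟪R x + t • Gstar x, Matrix.toEuclideanLin M (R x + t • Gstar x)⟫ ∂μ := by
    intro t
    have hscaled := hmin _ (const_smul_mem_finiteEnergyPotentials hΦstar (1 - t))
    have hres : ∀ x, F x - Matrix.toEuclideanLin M⁻¹ (gradient ((1 - t) • Φstar) x) =
        R x + t • Gstar x := fun x => by
      rw [gradient_const_smul (hΦstar.1 x), map_smul, ← hG, hR]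
      module
    simpa only [hres, ← hG, ← hR] using hscaled
  have hF : ∀ x, F x = R x + Gstar x := fun x => by rw [hR, sub_add_cancel]
  simp only [hF]
  exact (integral_inner_apply_add_of_forall_le
    (LinearMap.toContinuousLinearMap (Matrix.toEuclideanLin M)) hRL2 hGL2 hvar).trans
    (add_comm _ _)

/-- Pythagorean identity for the HPML projection: with `G⋆ = ∇_M Φ⋆` for a minimizer `Φ⋆`
of `J` over `S` and residual `R = F − G⋆`, one has
`∫ ‖F‖_M² dμ = ∫ ‖G⋆‖_M² dμ + ∫ ‖R‖_M² dμ`. -/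
theorem stmt_4 {d : ℕ}
    (M : Matrix (Fin d) (Fin d) ℝ) (hM : M.PosDef)
    (μ : Measure (EuclideanSpace ℝ (Fin d))) [IsProbabilityMeasure μ]
    (F : EuclideanSpace ℝ (Fin d) → EuclideanSpace ℝ (Fin d))
    (hFmeas : Measurable F) (hFint : Integrable (fun x => ‖F x‖ ^ 2) μ)
    (S : Set (EuclideanSpace ℝ (Fin d) → ℝ))
    (hS : S = {Φ | Differentiable ℝ Φ ∧ Measurable (fun x => gradient Φ x) ∧
      Integrable (fun x => ‖gradient Φ x‖ ^ 2) μ})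
    (J : (EuclideanSpace ℝ (Fin d) → ℝ) → ℝ)
    (hJ : J = fun Φ =>
      ∫ x, ⟪F x - Matrix.toEuclideanLin M⁻¹ (gradient Φ x),
        Matrix.toEuclideanLin M (F x - Matrix.toEuclideanLin M⁻¹ (gradient Φ x))⟫ ∂μ)
    (Φstar : EuclideanSpace ℝ (Fin d) → ℝ) (hΦstar : Φstar ∈ S)
    (hmin : ∀ Φ ∈ S, J Φstar ≤ J Φ)
    (Gstar R : EuclideanSpace ℝ (Fin d) → EuclideanSpace ℝ (Fin d))
    (hG : ∀ x, Gstar x = Matrix.toEuclideanLin M⁻¹ (gradient Φstar x))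
    (hR : ∀ x, R x = F x - Gstar x) :
    ∫ x, ⟪F x, Matrix.toEuclideanLin M (F x)⟫ ∂μ =
      (∫ x, ⟪Gstar x, Matrix.toEuclideanLin M (Gstar x)⟫ ∂μ) +
      ∫ x, ⟪R x, Matrix.toEuclideanLin M (R x)⟫ ∂μ :=
  stmt_4_general M μ F hFmeas hFint S hS J hJ Φstar hΦstar hmin Gstar R hG hR
end

section
/- Let X ⊆ E be a nonempty closed convex set with diameter at most D, let Φ : E → ℝ be differentiable with ‖∇Φ(x)‖ ≤ G for the point x under consideration, let η > 0, let x ∈ X, and let x⁺ ∈ X satisfy the projection variational inequality for y := x + η∇Φ(x): ⟨y − x⁺, z − x⁺⟩ ≤ 0 for all z ∈ X. Define the projected-step mapping 𝒢_η(x) := (1/η)(x⁺ − x). Then the potential gap is controlled by the step size: Gap_Φ(x) := sup_{u ∈ X} ⟨∇Φ(x), u − x⟩ ≤ (D + ηG)·‖𝒢_η(x)‖. -/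
open RealInnerProductSpace

/-- Gap bound via the projected-step mapping: for a projected ascent step,
`Gap_Φ(x) = sup_{u∈X} ⟨∇Φ(x), u − x⟩ ≤ (D + ηG)‖𝒢_η(x)‖` with
`𝒢_η(x) = (1/η)(x⁺ − x)`. -/
theorem stmt_13 {d : ℕ} (X : Set (EuclideanSpace ℝ (Fin d)))
    (hne : X.Nonempty) (hcl : IsClosed X) (hconv : Convex ℝ X)
    (D : ℝ) (hD : ∀ a ∈ X, ∀ b ∈ X, ‖a - b‖ ≤ D)
    (Φ : EuclideanSpace ℝ (Fin d) → ℝ) (hΦ : Differentiable ℝ Φ)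
    (G : ℝ) (η : ℝ) (hη : 0 < η)
    (x xplus : EuclideanSpace ℝ (Fin d)) (hx : x ∈ X) (hxp : xplus ∈ X)
    (hG : ‖gradient Φ x‖ ≤ G)
    (hVI : ∀ z ∈ X, ⟪(x + η • gradient Φ x) - xplus, z - xplus⟫ ≤ 0) :
    (⨆ u : X, ⟪gradient Φ x, (u : EuclideanSpace ℝ (Fin d)) - x⟫) ≤
      (D + η * G) * ‖(1 / η) • (xplus - x)‖ := by
  set g := gradient Φ x with hg
  have hne' : Nonempty X := hne.to_subtype
  have hnorm : ‖(1 / η) • (xplus - x)‖ = (1 / η) * ‖xplus - x‖ := by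
    rw [norm_smul, Real.norm_eq_abs, abs_of_pos (by positivity)]
  apply ciSup_le
  intro u
  have hVIu := hVI u u.2
  have h1 : ⟪x - xplus, (u : EuclideanSpace ℝ (Fin d)) - xplus⟫
      + η * ⟪g, (u : EuclideanSpace ℝ (Fin d)) - xplus⟫ ≤ 0 := by
    have : (x + η • g) - xplus = (x - xplus) + η • g := by abel
    rw [this, inner_add_left, real_inner_smul_left] at hVIu
    linarith
  have h2 : ⟪g, (u : EuclideanSpace ℝ (Fin d)) - xplus⟫
      ≤ (1 / η) * ⟪xplus - x, (u : EuclideanSpace ℝ (Fin d)) - xplus⟫ := by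
    have hx' : ⟪xplus - x, (u : EuclideanSpace ℝ (Fin d)) - xplus⟫
        = - ⟪x - xplus, (u : EuclideanSpace ℝ (Fin d)) - xplus⟫ := by
      rw [← inner_neg_left]; congr 1; abel
    rw [hx', div_mul_eq_mul_div, le_div_iff₀ hη]
    nlinarith [h1]
  have h3 : ⟪xplus - x, (u : EuclideanSpace ℝ (Fin d)) - xplus⟫
      ≤ ‖xplus - x‖ * D := by
    calc ⟪xplus - x, (u : EuclideanSpace ℝ (Fin d)) - xplus⟫
        ≤ ‖xplus - x‖ * ‖(u : EuclideanSpace ℝ (Fin d)) - xplus‖ :=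
          real_inner_le_norm _ _
      _ ≤ ‖xplus - x‖ * D := by
          gcongr
          exact hD _ u.2 _ hxp
  have h4 : ⟪g, xplus - x⟫ ≤ G * ‖xplus - x‖ := by
    calc ⟪g, xplus - x⟫ ≤ ‖g‖ * ‖xplus - x‖ := real_inner_le_norm _ _
      _ ≤ G * ‖xplus - x‖ := by gcongr
  have hsplit : ⟪g, (u : EuclideanSpace ℝ (Fin d)) - x⟫
      = ⟪g, (u : EuclideanSpace ℝ (Fin d)) - xplus⟫ + ⟪g, xplus - x⟫ := by
    rw [← inner_add_right]; congr 1; abel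
  rw [hsplit, hnorm]
  have hηinv : (0:ℝ) ≤ 1 / η := by positivity
  have h5 : ⟪g, (u : EuclideanSpace ℝ (Fin d)) - xplus⟫ ≤ (1 / η) * (‖xplus - x‖ * D) :=
    h2.trans (mul_le_mul_of_nonneg_left h3 hηinv)
  have hexp : (D + η * G) * (1 / η * ‖xplus - x‖)
      = 1 / η * (‖xplus - x‖ * D) + G * ‖xplus - x‖ := by
    field_simp
  linarith [h5, h4]
end

section
/- Let X ⊆ E be a nonempty closed convex set with diameter at most D, Φ : E → ℝ differentiable with ∇Φ L-Lipschitz on X, ‖∇Φ(x)‖ ≤ G for all x ∈ X, and Φ_min ≤ Φ(x) ≤ Φ_max for all x ∈ X. Suppose F(x) = −∇Φ(x) + R(x) with ‖R(x)‖ ≤ ε for all x ∈ X. Let 0 < η ≤ 1/L and T ≥ 1, and let iterates x₀ ∈ X, x_{t+1} ∈ X satisfy for each t the projection variational inequality ⟨(x_t + η∇Φ(x_t)) − x_{t+1}, z − x_{t+1}⟩ ≤ 0 for all z ∈ X. Then there exists t̂ ∈ {0,…,T−1} such that Gap(x_{t̂}) = sup_{u ∈ X} ⟨F(x_{t̂}),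 x_{t̂} − u⟩ ≤ (D + ηG)·√(2(Φ_max − Φ_min)/(Tη)) + Dε. -/
/-!
Projected gradient ascent with step `η ≤ 1/L` increases `Φ` by at least `‖x_{t+1} - x_t‖² / (2η)`
per step (projection inequality plus the quadratic lower bound for `L`-smooth `Φ`), so the squared
step lengths sum to at most `2η(Φ_max - Φ_min)` and some step among the first `T` has
`‖x_{t+1} - x_t‖ ≤ η √(2(Φ_max - Φ_min)/(Tη))`. At that iterate the projection inequality, tested
against an arbitrary `u ∈ X`, bounds `⟪∇Φ(x_t), u - x_t⟫` by `(D/η + G)` times the step length,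
and the perturbation `R` contributes at most `Dε`.
-/

open RealInnerProductSpace

variable {E : Type*} [NormedAddCommGroup E] [InnerProductSpace ℝ E]

theorem sq_norm_sub_le_inner_of_projection {y g p : E} {η : ℝ}
    (h : ⟪y + η • g - p, y - p⟫ ≤ 0) : ‖p - y‖ ^ 2 ≤ η * ⟪g, p - y⟫ := by
  rw [add_sub_right_comm, inner_add_left, real_inner_self_eq_norm_sq, real_inner_smul_left,
    ← neg_sub p y, inner_neg_right, norm_neg] at h
  linarith

theorem inner_sub_le_of_projection {y g p u : E} {η : ℝ} (hη : 0 ≤ η)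
    (h : ⟪y + η • g - p, u - p⟫ ≤ 0) :
    η * ⟪g, u - y⟫ ≤ (‖u - p‖ + η * ‖g‖) * ‖p - y‖ := by
  rw [add_sub_right_comm, inner_add_left, real_inner_smul_left, ← neg_sub p y,
    inner_neg_left] at h
  rw [show u - y = (u - p) + (p - y) by abel, inner_add_right]
  have h1 := real_inner_le_norm (p - y) (u - p)
  have h2 := real_inner_le_norm g (p - y)
  nlinarith [mul_le_mul_of_nonneg_left h2 hη]

theorem inner_neg_add_sub_le_of_projection {X : Set E} {D : ℝ}
    (hD : ∀ a ∈ X, ∀ b ∈ X, ‖a - b‖ ≤ D) {y p u g r : E} (hy : y ∈ X) (hp : p ∈ X) (hu : u ∈ X)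
    {η G ε ρ : ℝ} (hη : 0 < η) (hg : ‖g‖ ≤ G) (hr : ‖r‖ ≤ ε)
    (h : ⟪y + η • g - p, u - p⟫ ≤ 0) (hstep : ‖p - y‖ ≤ η * ρ) :
    ⟪-g + r, y - u⟫ ≤ (D + η * G) * ρ + D * ε := by
  have hgrad : ⟪g, u - y⟫ ≤ (D + η * G) * ρ := by
    have hcoef : ‖u - p‖ + η * ‖g‖ ≤ D + η * G :=
      add_le_add (hD _ hu _ hp) (mul_le_mul_of_nonneg_left hg hη.le)
    refine le_of_mul_le_mul_left ?_ hη
    calc η * ⟪g, u - y⟫ ≤ (‖u - p‖ + η * ‖g‖) * ‖p - y‖ := inner_sub_le_of_projection hη.le h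
      _ ≤ (D + η * G) * (η * ρ) :=
          mul_le_mul hcoef hstep (norm_nonneg _) ((by positivity : (0 : ℝ) ≤ _).trans hcoef)
      _ = η * ((D + η * G) * ρ) := by ring
  have hres : ⟪r, y - u⟫ ≤ D * ε := by
    calc ⟪r, y - u⟫ ≤ ‖r‖ * ‖y - u‖ := real_inner_le_norm _ _
      _ ≤ ε * D := mul_le_mul hr (hD _ hy _ hu) (norm_nonneg _) ((norm_nonneg _).trans hr)
      _ = D * ε := mul_comm _ _
  calc ⟪-g + r, y - u⟫ = ⟪g, u - y⟫ + ⟪r, y - u⟫ := by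
        rw [inner_add_left, inner_neg_left, ← inner_neg_right, neg_sub]
    _ ≤ _ := add_le_add hgrad hres

variable [CompleteSpace E]

theorem hasDerivAt_comp_add_smul {Φ : E → ℝ} (hΦ : Differentiable ℝ Φ) (a v : E) (t : ℝ) :
    HasDerivAt (fun s : ℝ => Φ (a + s • v)) ⟪gradient Φ (a + t • v), v⟫ t := by
  have hline : HasDerivAt (fun s : ℝ => a + s • v) v t := by
    simpa using ((hasDerivAt_id t).smul_const v).const_add a
  rw [inner_gradient_left]
  exact (hΦ _).hasFDerivAt.comp_hasDerivAt t hline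

theorem Convex.quadratic_lower_bound_of_lipschitz_gradient {X : Set E} (hconv : Convex ℝ X)
    {Φ : E → ℝ} (hΦ : Differentiable ℝ Φ) {L : ℝ}
    (hlip : ∀ a ∈ X, ∀ b ∈ X, ‖gradient Φ a - gradient Φ b‖ ≤ L * ‖a - b‖)
    {a b : E} (ha : a ∈ X) (hb : b ∈ X) :
    Φ a + ⟪gradient Φ a, b - a⟫ - L / 2 * ‖b - a‖ ^ 2 ≤ Φ b := by
  set v := b - a
  -- `ψ` is monotone on `[0, 1]` because the Lipschitz bound controls its derivative from below.
  set ψ : ℝ → ℝ := fun t => Φ (a + t • v) - t * ⟪gradient Φ a, v⟫ + L / 2 * t ^ 2 * ‖v‖ ^ 2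
  have hψ : ∀ t, HasDerivAt ψ
      (⟪gradient Φ (a + t • v), v⟫ - ⟪gradient Φ a, v⟫ + L * t * ‖v‖ ^ 2) t := by
    intro t
    exact (((hasDerivAt_comp_add_smul hΦ a v t).sub
      ((hasDerivAt_id t).mul_const ⟪gradient Φ a, v⟫)).add
      (((hasDerivAt_pow 2 t).const_mul (L / 2)).mul_const (‖v‖ ^ 2))).congr_deriv (by ring)
  have hmono : MonotoneOn ψ (Set.Icc 0 1) := by
    refine monotoneOn_of_deriv_nonneg (convex_Icc 0 1)
      (HasDerivAt.continuousOn fun t _ => hψ t)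
      (fun t _ => (hψ t).differentiableAt.differentiableWithinAt) fun t ht => ?_
    rw [interior_Icc] at ht
    rw [(hψ t).deriv]
    have hmem : a + t • v ∈ X := hconv.add_smul_sub_mem ha hb ⟨ht.1.le, ht.2.le⟩
    have hgrad : ‖gradient Φ (a + t • v) - gradient Φ a‖ ≤ L * (t * ‖v‖) := by
      simpa [norm_smul, abs_of_pos ht.1] using hlip _ hmem a ha
    have hinner := real_inner_le_norm (gradient Φ a - gradient Φ (a + t • v)) v
    rw [inner_sub_left, ← norm_neg, neg_sub] at hinner
    nlinarith [mul_le_mul_of_nonneg_right hgrad (norm_nonneg v)]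
  have h01 := hmono (Set.left_mem_Icc.mpr zero_le_one) (Set.right_mem_Icc.mpr zero_le_one)
    zero_le_one
  simp only [ψ, v, zero_smul, add_zero, one_smul, add_sub_cancel] at h01
  linarith

theorem Convex.sq_norm_sub_le_of_projected_gradient_step {X : Set E} (hconv : Convex ℝ X)
    {Φ : E → ℝ} (hΦ : Differentiable ℝ Φ) {L : ℝ}
    (hlip : ∀ a ∈ X, ∀ b ∈ X, ‖gradient Φ a - gradient Φ b‖ ≤ L * ‖a - b‖)
    {y p : E} (hy : y ∈ X) (hp : p ∈ X) {η : ℝ} (hη : 0 < η) (hLη : L * η ≤ 1)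
    (h : ⟪y + η • gradient Φ y - p, y - p⟫ ≤ 0) :
    ‖p - y‖ ^ 2 ≤ 2 * η * (Φ p - Φ y) := by
  have hproj := sq_norm_sub_le_inner_of_projection h
  have hsmooth := hconv.quadratic_lower_bound_of_lipschitz_gradient hΦ hlip hy hp
  nlinarith [mul_le_mul_of_nonneg_left hsmooth hη.le,
    mul_le_mul_of_nonneg_right hLη (sq_nonneg ‖p - y‖)]

theorem exists_lt_le_div_of_le_mul_sub_succ {a f : ℕ → ℝ} {c m M : ℝ} (hc : 0 ≤ c)
    (ha : ∀ t, a t ≤ c * (f (t + 1) - f t)) {T : ℕ} (hT : 0 < T) (hm : m ≤ f 0) (hM : f T ≤ M) :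
    ∃ t < T, a t ≤ c * (M - m) / T := by
  have hsum : ∑ t ∈ Finset.range T, a t ≤ ∑ _t ∈ Finset.range T, c * (M - m) / T := by
    calc ∑ t ∈ Finset.range T, a t
        ≤ ∑ t ∈ Finset.range T, c * (f (t + 1) - f t) := Finset.sum_le_sum fun t _ => ha t
      _ = c * (f T - f 0) := by rw [← Finset.mul_sum, Finset.sum_range_sub]
      _ ≤ c * (M - m) := by gcongr
      _ = ∑ _t ∈ Finset.range T, c * (M - m) / T := by
        rw [Finset.sum_const, Finset.card_range, nsmul_eq_mul]
        field_simp
  obtain ⟨t, ht, hle⟩ := Finset.exists_le_of_sum_le (Finset.nonempty_range_iff.mpr hT.ne') hsum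
  exact ⟨t, Finset.mem_range.mp ht, hle⟩

theorem stmt_14_general {d : ℕ} (X : Set (EuclideanSpace ℝ (Fin d)))
    (hconv : Convex ℝ X)
    (D : ℝ) (hD : ∀ a ∈ X, ∀ b ∈ X, ‖a - b‖ ≤ D)
    (Φ : EuclideanSpace ℝ (Fin d) → ℝ) (hΦ : Differentiable ℝ Φ)
    (L : ℝ) (hL : 0 < L)
    (hlip : ∀ a ∈ X, ∀ b ∈ X, ‖gradient Φ a - gradient Φ b‖ ≤ L * ‖a - b‖)
    (G : ℝ) (hG : ∀ y ∈ X, ‖gradient Φ y‖ ≤ G)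
    (Φmin Φmax : ℝ) (hΦbd : ∀ y ∈ X, Φmin ≤ Φ y ∧ Φ y ≤ Φmax)
    (F R : EuclideanSpace ℝ (Fin d) → EuclideanSpace ℝ (Fin d))
    (hF : ∀ y, F y = -gradient Φ y + R y)
    (ε : ℝ) (hR : ∀ y ∈ X, ‖R y‖ ≤ ε)
    (η : ℝ) (hη0 : 0 < η) (hη : η ≤ 1 / L)
    (T : ℕ) (hT : 1 ≤ T)
    (x : ℕ → EuclideanSpace ℝ (Fin d)) (hxX : ∀ t, x t ∈ X)
    (hVI : ∀ t, ∀ z ∈ X,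
      ⟪(x t + η • gradient Φ (x t)) - x (t + 1), z - x (t + 1)⟫ ≤ 0) :
    ∃ that : ℕ, that < T ∧
      (⨆ u : X, ⟪F (x that), x that - (u : EuclideanSpace ℝ (Fin d))⟫) ≤
        (D + η * G) * Real.sqrt (2 * (Φmax - Φmin) / (T * η)) + D * ε := by
  have hLη : L * η ≤ 1 := by rwa [le_div_iff₀ hL, mul_comm] at hη
  obtain ⟨t, htT, hstep⟩ := exists_lt_le_div_of_le_mul_sub_succ
    (a := fun t => ‖x (t + 1) - x t‖ ^ 2) (f := fun t => Φ (x t)) (by positivity)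
    (fun t => hconv.sq_norm_sub_le_of_projected_gradient_step hΦ hlip (hxX t) (hxX (t + 1))
      hη0 hLη (hVI t _ (hxX t))) hT (hΦbd _ (hxX 0)).1 (hΦbd _ (hxX T)).2
  refine ⟨t, htT, ?_⟩
  set ρ := Real.sqrt (2 * (Φmax - Φmin) / (T * η))
  have hδ : ‖x (t + 1) - x t‖ ≤ η * ρ := by
    obtain ⟨hmin, hmax⟩ := hΦbd _ (hxX 0)
    rw [← sq_le_sq₀ (norm_nonneg _) (by positivity), mul_pow,
      Real.sq_sqrt (div_nonneg (by linarith) (by positivity))]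
    have hTpos : (0 : ℝ) < T := by exact_mod_cast hT
    refine hstep.trans_eq ?_
    field_simp
  have : Nonempty X := ⟨⟨x 0, hxX 0⟩⟩
  refine ciSup_le fun ⟨u, hu⟩ => ?_
  rw [hF]
  exact inner_neg_add_sub_le_of_projection hD (hxX t) (hxX (t + 1)) hu hη0 (hG _ (hxX t))
    (hR _ (hxX t)) (hVI t u hu) hδ

/-- Gap bound with additive non-potentiality: for exact projected ascent along `∇Φ` with
`F = −∇Φ + R`, `‖R‖ ≤ ε` on `X`, `0 < η ≤ 1/L`, and `T ≥ 1` steps, some iterate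
`x_t̂`, `t̂ < T`, satisfies
`Gap(x_t̂) ≤ (D + ηG)·√(2(Φ_max − Φ_min)/(Tη)) + Dε`. -/
theorem stmt_14 {d : ℕ} (X : Set (EuclideanSpace ℝ (Fin d)))
    (hne : X.Nonempty) (hcl : IsClosed X) (hconv : Convex ℝ X)
    (D : ℝ) (hD : ∀ a ∈ X, ∀ b ∈ X, ‖a - b‖ ≤ D)
    (Φ : EuclideanSpace ℝ (Fin d) → ℝ) (hΦ : Differentiable ℝ Φ)
    (L : ℝ) (hL : 0 < L)
    (hlip : ∀ a ∈ X, ∀ b ∈ X, ‖gradient Φ a - gradient Φ b‖ ≤ L * ‖a - b‖)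
    (G : ℝ) (hG : ∀ y ∈ X, ‖gradient Φ y‖ ≤ G)
    (Φmin Φmax : ℝ) (hΦbd : ∀ y ∈ X, Φmin ≤ Φ y ∧ Φ y ≤ Φmax)
    (F R : EuclideanSpace ℝ (Fin d) → EuclideanSpace ℝ (Fin d))
    (hF : ∀ y, F y = -gradient Φ y + R y)
    (ε : ℝ) (hR : ∀ y ∈ X, ‖R y‖ ≤ ε)
    (η : ℝ) (hη0 : 0 < η) (hη : η ≤ 1 / L)
    (T : ℕ) (hT : 1 ≤ T)
    (x : ℕ → EuclideanSpace ℝ (Fin d)) (hxX : ∀ t, x t ∈ X)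
    (hVI : ∀ t, ∀ z ∈ X,
      ⟪(x t + η • gradient Φ (x t)) - x (t + 1), z - x (t + 1)⟫ ≤ 0) :
    ∃ that : ℕ, that < T ∧
      (⨆ u : X, ⟪F (x that), x that - (u : EuclideanSpace ℝ (Fin d))⟫) ≤
        (D + η * G) * Real.sqrt (2 * (Φmax - Φmin) / (T * η)) + D * ε :=
  stmt_14_general X hconv D hD Φ hΦ L hL hlip G hG Φmin Φmax hΦbd F R hF ε hR η hη0 hη T hT x hxX
    hVI
end

section
/- Let X ⊆ E be a nonempty closed convex set with diameter at most D, Φ : E → ℝ differentiable with ∇Φ L-Lipschitz on X, ‖∇Φ(x)‖ ≤ G for all x ∈ X, and Φ_min ≤ Φ(x) ≤ Φ_max for all x ∈ X. Suppose F(x) = −∇Φ(x) + R(x) for a map R : E → E. Let 0 < η ≤ 1/L and T ≥ 1, and let iterates x₀ ∈ X, x_{t+1} ∈ X satisfy for each t the projection variational inequality ⟨(x_t + η∇Φ(x_t)) − x_{t+1}, z − x_{t+1}⟩ ≤ 0 for all z ∈ X. Then the average gap over the first T iterates satisfies (1/T)·Σ_{t=0}^{T−1} Gap(x_t) ≤ (D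 + ηG)·√(2(Φ_max − Φ_min)/(Tη)) + D·√((1/T)·Σ_{t=0}^{T−1} ‖R(x_t)‖²). -/
open RealInnerProductSpace

/-- Quadratic ascent/descent lemma on a convex set with Lipschitz gradient. -/
lemma ascent_aux {d : ℕ} {X : Set (EuclideanSpace ℝ (Fin d))} (hconv : Convex ℝ X)
    {Φ : EuclideanSpace ℝ (Fin d) → ℝ} (hΦ : Differentiable ℝ Φ)
    {L : ℝ}
    (hlip : ∀ a ∈ X, ∀ b ∈ X, ‖gradient Φ a - gradient Φ b‖ ≤ L * ‖a - b‖)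
    {a b : EuclideanSpace ℝ (Fin d)} (ha : a ∈ X) (hb : b ∈ X) :
    Φ a + ⟪gradient Φ a, b - a⟫ - L / 2 * ‖b - a‖ ^ 2 ≤ Φ b := by
  set v := b - a with hv
  set h : ℝ → ℝ := fun s => Φ (a + s • v) - s * ⟪gradient Φ a, v⟫ + L * s ^ 2 * ‖v‖ ^ 2 / 2
    with hh
  have hc : ∀ s : ℝ, HasDerivAt (fun s : ℝ => a + s • v) v s := by
    intro s
    simpa using ((hasDerivAt_id s).smul_const v).const_add a
  have hder : ∀ s : ℝ, HasDerivAt h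
      (⟪gradient Φ (a + s • v), v⟫ - ⟪gradient Φ a, v⟫ + L * s * ‖v‖ ^ 2) s := by
    intro s
    have h1 : HasDerivAt (fun s : ℝ => Φ (a + s • v)) ⟪gradient Φ (a + s • v), v⟫ s := by
      have hf := (hΦ (a + s • v)).hasGradientAt.hasFDerivAt
      simpa [Function.comp_def] using hf.comp_hasDerivAt s (hc s)
    have h2 : HasDerivAt (fun s : ℝ => s * ⟪gradient Φ a, v⟫) ⟪gradient Φ a, v⟫ s := by
      simpa using (hasDerivAt_id s).mul_const (⟪gradient Φ a, v⟫)
    have h3 : HasDerivAt (fun s : ℝ => L * s ^ 2 * ‖v‖ ^ 2 / 2) (L * s * ‖v‖ ^ 2) s := by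
      have : HasDerivAt (fun s : ℝ => s ^ 2) (2 * s) s := by
        simpa using hasDerivAt_pow 2 s
      have := ((this.const_mul L).mul_const (‖v‖ ^ 2)).div_const 2
      rw [show L * s * ‖v‖ ^ 2 = L * (2 * s) * ‖v‖ ^ 2 / 2 by ring]
      exact this
    exact (h1.sub h2).add h3
  have hmem : ∀ s ∈ Set.Icc (0:ℝ) 1, a + s • v ∈ X := by
    intro s hs
    have : a + s • v = (1 - s) • a + s • b := by
      rw [hv]; module
    rw [this]
    exact hconv ha hb (by linarith [hs.2]) hs.1 (by ring)
  have hmono : MonotoneOn h (Set.Icc (0:ℝ) 1) := by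
    apply monotoneOn_of_deriv_nonneg (convex_Icc 0 1)
    · exact Continuous.continuousOn (by
        have : Differentiable ℝ h := fun s => (hder s).differentiableAt
        exact this.continuous)
    · intro s _
      exact ((hder s).differentiableAt).differentiableWithinAt
    · intro s hs
      rw [interior_Icc] at hs
      rw [(hder s).deriv]
      have hsX : a + s • v ∈ X := hmem s ⟨hs.1.le, hs.2.le⟩
      have hip : ⟪gradient Φ (a + s • v) - gradient Φ a, v⟫ ≥
          -(L * s * ‖v‖ ^ 2) := by
        have h1 : |⟪gradient Φ (a + s • v) - gradient Φ a, v⟫| ≤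
            ‖gradient Φ (a + s • v) - gradient Φ a‖ * ‖v‖ := abs_real_inner_le_norm _ _
        have h2 : ‖gradient Φ (a + s • v) - gradient Φ a‖ ≤ L * (s * ‖v‖) := by
          have := hlip _ hsX _ ha
          simpa [norm_smul, abs_of_pos hs.1] using this
        have h3 : ‖gradient Φ (a + s • v) - gradient Φ a‖ * ‖v‖ ≤ L * s * ‖v‖ ^ 2 := by
          have := mul_le_mul_of_nonneg_right h2 (norm_nonneg v)
          calc ‖gradient Φ (a + s • v) - gradient Φ a‖ * ‖v‖
              ≤ L * (s * ‖v‖) * ‖v‖ := this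
            _ = L * s * ‖v‖ ^ 2 := by ring
        have := abs_le.mp (h1.trans h3)
        linarith [this.1]
      have : ⟪gradient Φ (a + s • v) - gradient Φ a, v⟫ =
          ⟪gradient Φ (a + s • v), v⟫ - ⟪gradient Φ a, v⟫ := inner_sub_left _ _ _
      linarith [hip, this ▸ hip]
  have h01 : h 0 ≤ h 1 := hmono (Set.mem_Icc.mpr ⟨le_refl 0, zero_le_one⟩)
    (Set.mem_Icc.mpr ⟨zero_le_one, le_refl 1⟩) zero_le_one
  have e0 : h 0 = Φ a := by simp [hh]
  have e1 : h 1 = Φ b - ⟪gradient Φ a, v⟫ + L * ‖v‖ ^ 2 / 2 := by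
    simp [hh, hv]
  rw [e0, e1] at h01
  linarith

/-- Deterministic (finite-average) `L²` form of the output-law gap bound: the average gap over
the first `T` iterates of exact projected ascent is bounded by the stationarity term plus
`D` times the root-mean-square residual energy along the iterates. -/
theorem stmt_15 {d : ℕ} (X : Set (EuclideanSpace ℝ (Fin d)))
    (hne : X.Nonempty) (hcl : IsClosed X) (hconv : Convex ℝ X)
    (D : ℝ) (hD : ∀ a ∈ X, ∀ b ∈ X, ‖a - b‖ ≤ D)
    (Φ : EuclideanSpace ℝ (Fin d) → ℝ) (hΦ : Differentiable ℝ Φ)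
    (L : ℝ) (hL : 0 < L)
    (hlip : ∀ a ∈ X, ∀ b ∈ X, ‖gradient Φ a - gradient Φ b‖ ≤ L * ‖a - b‖)
    (G : ℝ) (hG : ∀ y ∈ X, ‖gradient Φ y‖ ≤ G)
    (Φmin Φmax : ℝ) (hΦbd : ∀ y ∈ X, Φmin ≤ Φ y ∧ Φ y ≤ Φmax)
    (F R : EuclideanSpace ℝ (Fin d) → EuclideanSpace ℝ (Fin d))
    (hF : ∀ y, F y = -gradient Φ y + R y)
    (η : ℝ) (hη0 : 0 < η) (hη : η ≤ 1 / L)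
    (T : ℕ) (hT : 1 ≤ T)
    (x : ℕ → EuclideanSpace ℝ (Fin d)) (hxX : ∀ t, x t ∈ X)
    (hVI : ∀ t, ∀ z ∈ X,
      ⟪(x t + η • gradient Φ (x t)) - x (t + 1), z - x (t + 1)⟫ ≤ 0) :
    (1 / (T : ℝ)) * ∑ t ∈ Finset.range T,
        (⨆ u : X, ⟪F (x t), x t - (u : EuclideanSpace ℝ (Fin d))⟫) ≤
      (D + η * G) * Real.sqrt (2 * (Φmax - Φmin) / (T * η)) +
      D * Real.sqrt ((1 / (T : ℝ)) * ∑ t ∈ Finset.range T, ‖R (x t)‖ ^ 2) := by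
  haveI : Nonempty X := hne.to_subtype
  obtain ⟨p, hp⟩ := hne
  have hTpos : (0:ℝ) < T := by exact_mod_cast Nat.lt_of_lt_of_le Nat.zero_lt_one hT
  have hD0 : 0 ≤ D := by simpa using hD p hp p hp
  have hG0 : 0 ≤ G := le_trans (norm_nonneg _) (hG p hp)
  have hM0 : 0 ≤ Φmax - Φmin := by
    have := hΦbd p hp; linarith [this.1, this.2]
  have hηL : η * L ≤ 1 := by
    rw [le_div_iff₀ hL] at hη
    linarith
  set g : ℕ → EuclideanSpace ℝ (Fin d) := fun t => gradient Φ (x t) with hg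
  set Δ : ℕ → EuclideanSpace ℝ (Fin d) := fun t => x (t + 1) - x t with hΔ
  -- key1: ‖Δ t‖² ≤ η ⟪g t, Δ t⟫
  have key1 : ∀ t, ‖Δ t‖ ^ 2 ≤ η * ⟪g t, Δ t⟫ := by
    intro t
    have h := hVI t (x t) (hxX t)
    have e1 : (x t + η • g t) - x (t + 1) = η • g t - Δ t := by
      rw [hΔ]; module
    have e2 : x t - x (t + 1) = -Δ t := by rw [hΔ]; module
    rw [e1, e2, inner_neg_right, inner_sub_left, real_inner_smul_left] at h
    have : ⟪Δ t, Δ t⟫ = ‖Δ t‖ ^ 2 := real_inner_self_eq_norm_sq (Δ t)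
    rw [real_inner_comm (Δ t) (Δ t)] at this
    nlinarith [h]
  -- key3: ‖Δ t‖² ≤ 2η (Φ(x(t+1)) - Φ(x t))
  have key3 : ∀ t, ‖Δ t‖ ^ 2 ≤ 2 * η * (Φ (x (t + 1)) - Φ (x t)) := by
    intro t
    have hasc := ascent_aux hconv hΦ hlip (hxX t) (hxX (t + 1))
    have hΔeq : x (t + 1) - x t = Δ t := rfl
    rw [hΔeq] at hasc
    have k1 := key1 t
    nlinarith [sq_nonneg ‖Δ t‖, hη0]
  -- sum of squared steps
  have sumΔ : ∑ t ∈ Finset.range T, ‖Δ t‖ ^ 2 ≤ 2 * η * (Φmax - Φmin) := by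
    calc ∑ t ∈ Finset.range T, ‖Δ t‖ ^ 2
        ≤ ∑ t ∈ Finset.range T, 2 * η * (Φ (x (t + 1)) - Φ (x t)) :=
          Finset.sum_le_sum fun t _ => key3 t
      _ = 2 * η * (Φ (x T) - Φ (x 0)) := by
          rw [← Finset.mul_sum, Finset.sum_range_sub (fun t => Φ (x t))]
      _ ≤ 2 * η * (Φmax - Φmin) := by
          have h1 := (hΦbd (x T) (hxX T)).2
          have h2 := (hΦbd (x 0) (hxX 0)).1
          nlinarith [hη0]
  -- pointwise gap bound
  have gap_bd : ∀ t, (⨆ u : X, ⟪F (x t), x t - (u : EuclideanSpace ℝ (Fin d))⟫) ≤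
      (D + η * G) / η * ‖Δ t‖ + D * ‖R (x t)‖ := by
    intro t
    apply ciSup_le
    intro u
    have huX : (u : EuclideanSpace ℝ (Fin d)) ∈ X := u.2
    have hsplit : ⟪F (x t), x t - (u : EuclideanSpace ℝ (Fin d))⟫ =
        ⟪g t, (u : EuclideanSpace ℝ (Fin d)) - x t⟫ + ⟪R (x t), x t - u⟫ := by
      rw [hF]
      rw [inner_add_left, inner_neg_left, ← inner_neg_right]
      congr 2
      module
    have hR : ⟪R (x t), x t - (u : EuclideanSpace ℝ (Fin d))⟫ ≤ ‖R (x t)‖ * D := by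
      calc ⟪R (x t), x t - (u : EuclideanSpace ℝ (Fin d))⟫
          ≤ ‖R (x t)‖ * ‖x t - (u : EuclideanSpace ℝ (Fin d))‖ := real_inner_le_norm _ _
        _ ≤ ‖R (x t)‖ * D := by
            exact mul_le_mul_of_nonneg_left (hD _ (hxX t) _ huX) (norm_nonneg _)
    -- VI at u
    have hvi := hVI t u huX
    have e1 : (x t + η • g t) - x (t + 1) = η • g t - Δ t := by rw [hΔ]; module
    rw [e1, inner_sub_left, real_inner_smul_left] at hvi
    have hvi2 : η * ⟪g t, (u : EuclideanSpace ℝ (Fin d)) - x (t + 1)⟫ ≤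
        ⟪Δ t, (u : EuclideanSpace ℝ (Fin d)) - x (t + 1)⟫ := by linarith
    have hΔu : ⟪Δ t, (u : EuclideanSpace ℝ (Fin d)) - x (t + 1)⟫ ≤ ‖Δ t‖ * D := by
      calc ⟪Δ t, (u : EuclideanSpace ℝ (Fin d)) - x (t + 1)⟫
          ≤ ‖Δ t‖ * ‖(u : EuclideanSpace ℝ (Fin d)) - x (t + 1)‖ := real_inner_le_norm _ _
        _ ≤ ‖Δ t‖ * D := mul_le_mul_of_nonneg_left (hD _ huX _ (hxX (t + 1))) (norm_nonneg _)
    have hgΔ : ⟪g t, Δ t⟫ ≤ G * ‖Δ t‖ := by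
      calc ⟪g t, Δ t⟫ ≤ ‖g t‖ * ‖Δ t‖ := real_inner_le_norm _ _
        _ ≤ G * ‖Δ t‖ := mul_le_mul_of_nonneg_right (hG _ (hxX t)) (norm_nonneg _)
    have hsplit2 : ⟪g t, (u : EuclideanSpace ℝ (Fin d)) - x t⟫ =
        ⟪g t, (u : EuclideanSpace ℝ (Fin d)) - x (t + 1)⟫ + ⟪g t, Δ t⟫ := by
      rw [← inner_add_right]
      congr 1
      rw [hΔ]; module
    have hgu : ⟪g t, (u : EuclideanSpace ℝ (Fin d)) - x (t + 1)⟫ ≤ ‖Δ t‖ * D / η := by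
      rw [le_div_iff₀ hη0]
      calc ⟪g t, (u : EuclideanSpace ℝ (Fin d)) - x (t + 1)⟫ * η
          = η * ⟪g t, (u : EuclideanSpace ℝ (Fin d)) - x (t + 1)⟫ := by ring
        _ ≤ ‖Δ t‖ * D := hvi2.trans hΔu
    rw [hsplit, hsplit2]
    have : ‖Δ t‖ * D / η + G * ‖Δ t‖ = (D + η * G) / η * ‖Δ t‖ := by
      field_simp
    linarith [hgu, hgΔ, hR, this ▸ (le_refl (‖Δ t‖ * D / η + G * ‖Δ t‖))]
  -- sum the gap bounds
  set A : ℝ := ∑ t ∈ Finset.range T, ‖Δ t‖ with hA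
  set B : ℝ := ∑ t ∈ Finset.range T, ‖R (x t)‖ with hB
  set SR : ℝ := ∑ t ∈ Finset.range T, ‖R (x t)‖ ^ 2 with hSR
  have hSR0 : 0 ≤ SR := Finset.sum_nonneg fun t _ => sq_nonneg _
  have hA0 : 0 ≤ A := Finset.sum_nonneg fun t _ => norm_nonneg _
  have hB0 : 0 ≤ B := Finset.sum_nonneg fun t _ => norm_nonneg _
  have sum_gap : ∑ t ∈ Finset.range T,
      (⨆ u : X, ⟪F (x t), x t - (u : EuclideanSpace ℝ (Fin d))⟫) ≤
      (D + η * G) / η * A + D * B := by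
    calc ∑ t ∈ Finset.range T, (⨆ u : X, ⟪F (x t), x t - (u : EuclideanSpace ℝ (Fin d))⟫)
        ≤ ∑ t ∈ Finset.range T, ((D + η * G) / η * ‖Δ t‖ + D * ‖R (x t)‖) :=
          Finset.sum_le_sum fun t _ => gap_bd t
      _ = (D + η * G) / η * A + D * B := by
          rw [Finset.sum_add_distrib, ← Finset.mul_sum, ← Finset.mul_sum]
  -- Cauchy-Schwarz for A
  have hA2 : A ^ 2 ≤ T * (2 * η * (Φmax - Φmin)) := by
    have := sq_sum_le_card_mul_sum_sq (s := Finset.range T) (f := fun t => ‖Δ t‖)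
    simp only [Finset.card_range] at this
    calc A ^ 2 ≤ (T : ℝ) * ∑ t ∈ Finset.range T, ‖Δ t‖ ^ 2 := this
      _ ≤ T * (2 * η * (Φmax - Φmin)) :=
          mul_le_mul_of_nonneg_left sumΔ hTpos.le
  have hAle : A ≤ Real.sqrt (T * (2 * η * (Φmax - Φmin))) := by
    rw [show A = Real.sqrt (A ^ 2) by rw [Real.sqrt_sq hA0]]
    exact Real.sqrt_le_sqrt hA2
  -- Cauchy-Schwarz for B
  have hB2 : B ^ 2 ≤ T * SR := by
    have := sq_sum_le_card_mul_sum_sq (s := Finset.range T) (f := fun t => ‖R (x t)‖)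
    simpa [Finset.card_range] using this
  have hBle : B ≤ Real.sqrt (T * SR) := by
    rw [show B = Real.sqrt (B ^ 2) by rw [Real.sqrt_sq hB0]]
    exact Real.sqrt_le_sqrt hB2
  -- sqrt identities
  have hid1 : Real.sqrt (2 * (Φmax - Φmin) / (T * η)) =
      Real.sqrt (T * (2 * η * (Φmax - Φmin))) / (T * η) := by
    rw [eq_div_iff (by positivity : (T : ℝ) * η ≠ 0)]
    rw [show (T : ℝ) * η = Real.sqrt ((T * η) ^ 2) by
      rw [Real.sqrt_sq (by positivity)]]
    rw [← Real.sqrt_mul (by positivity)]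
    congr 1
    field_simp
    rw [← mul_pow, Real.sqrt_sq (by positivity)]
    ring
  have hid2 : Real.sqrt ((1 / (T : ℝ)) * SR) = Real.sqrt (T * SR) / T := by
    rw [eq_div_iff (by positivity : (T : ℝ) ≠ 0)]
    rw [show (T : ℝ) = Real.sqrt ((T : ℝ) ^ 2) by rw [Real.sqrt_sq hTpos.le]]
    rw [← Real.sqrt_mul (by positivity)]
    congr 1
    field_simp
    rw [Real.sq_sqrt (by positivity)]
  -- finish
  have hcoef : 0 ≤ (D + η * G) / η := by positivity
  have step1 : (1 / (T : ℝ)) * ∑ t ∈ Finset.range T,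
      (⨆ u : X, ⟪F (x t), x t - (u : EuclideanSpace ℝ (Fin d))⟫) ≤
      (1 / (T : ℝ)) * ((D + η * G) / η * A + D * B) :=
    mul_le_mul_of_nonneg_left sum_gap (by positivity)
  refine step1.trans ?_
  rw [hid1, hid2]
  have t1 : (1 / (T : ℝ)) * ((D + η * G) / η * A) ≤
      (D + η * G) * (Real.sqrt (T * (2 * η * (Φmax - Φmin))) / (T * η)) := by
    have := mul_le_mul_of_nonneg_left hAle hcoef
    calc (1 / (T : ℝ)) * ((D + η * G) / η * A)
        ≤ (1 / (T : ℝ)) * ((D + η * G) / η * Real.sqrt (T * (2 * η * (Φmax - Φmin)))) :=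
          mul_le_mul_of_nonneg_left this (by positivity)
      _ = (D + η * G) * (Real.sqrt (T * (2 * η * (Φmax - Φmin))) / (T * η)) := by
          field_simp
  have t2 : (1 / (T : ℝ)) * (D * B) ≤ D * (Real.sqrt (T * SR) / T) := by
    have := mul_le_mul_of_nonneg_left hBle hD0
    calc (1 / (T : ℝ)) * (D * B) ≤ (1 / (T : ℝ)) * (D * Real.sqrt (T * SR)) :=
          mul_le_mul_of_nonneg_left this (by positivity)
      _ = D * (Real.sqrt (T * SR) / T) := by field_simp
  calc (1 / (T : ℝ)) * ((D + η * G) / η * A + D * B)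
      = (1 / (T : ℝ)) * ((D + η * G) / η * A) + (1 / (T : ℝ)) * (D * B) := by ring
    _ ≤ (D + η * G) * (Real.sqrt (T * (2 * η * (Φmax - Φmin))) / (T * η)) +
        D * (Real.sqrt (T * SR) / T) := add_le_add t1 t2
end

section
/- Let X ⊆ E be a nonempty closed convex set with diameter at most D, Φ : E → ℝ differentiable, x ∈ X, g ∈ E, and η > 0. Let x⁺ ∈ X satisfy the projection variational inequality for y := x + ηg: ⟨y − x⁺, z − x⁺⟩ ≤ 0 for all z ∈ X, and set 𝒢̃_η(x) := (1/η)(x⁺ − x) and e := g − ∇Φ(x). Then Gap_Φ(x) := sup_{u ∈ X} ⟨∇Φ(x), u − x⟩ ≤ (D + η‖g‖)·‖𝒢̃_η(x)‖ + D‖e‖. -/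
open RealInnerProductSpace

/-- Gap bound via an inexact projected-step mapping: with `x⁺` the projection of `x + ηg`,
`𝒢̃_η(x) = (1/η)(x⁺ − x)` and direction error `e = g − ∇Φ(x)`,
`Gap_Φ(x) = sup_{u∈X} ⟨∇Φ(x), u − x⟩ ≤ (D + η‖g‖)‖𝒢̃_η(x)‖ + D‖e‖`. -/
theorem stmt_16 {d : ℕ} (X : Set (EuclideanSpace ℝ (Fin d)))
    (hne : X.Nonempty) (hcl : IsClosed X) (hconv : Convex ℝ X)
    (D : ℝ) (hD : ∀ a ∈ X, ∀ b ∈ X, ‖a - b‖ ≤ D)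
    (Φ : EuclideanSpace ℝ (Fin d) → ℝ) (hΦ : Differentiable ℝ Φ)
    (x : EuclideanSpace ℝ (Fin d)) (hx : x ∈ X)
    (g : EuclideanSpace ℝ (Fin d)) (η : ℝ) (hη : 0 < η)
    (xplus : EuclideanSpace ℝ (Fin d)) (hxp : xplus ∈ X)
    (hVI : ∀ z ∈ X, ⟪(x + η • g) - xplus, z - xplus⟫ ≤ 0) :
    (⨆ u : X, ⟪gradient Φ x, (u : EuclideanSpace ℝ (Fin d)) - x⟫) ≤
      (D + η * ‖g‖) * ‖(1 / η) • (xplus - x)‖ + D * ‖g - gradient Φ x‖ := by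

  haveI : Nonempty X := hne.to_subtype
  have hD0 : 0 ≤ D := by
    have := hD x hx x hx
    simpa using this
  set G := gradient Φ x with hG
  apply ciSup_le
  rintro ⟨u, hu⟩
  simp only
  set N := ‖xplus - x‖ with hN
  have hnorm : ‖(1 / η) • (xplus - x)‖ = (1 / η) * N := by
    rw [norm_smul, Real.norm_eq_abs, abs_of_pos (by positivity)]
  rw [hnorm]
  have h1 : ⟪G, u - x⟫ = ⟪g, u - x⟫ - ⟪g - G, u - x⟫ := by
    rw [inner_sub_left]; ring
  have h2 : -⟪g - G, u - x⟫ ≤ D * ‖g - G‖ := by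
    have := abs_real_inner_le_norm (g - G) (u - x)
    have hux : ‖u - x‖ ≤ D := hD u hu x hx
    have h3 : -⟪g - G, u - x⟫ ≤ ‖g - G‖ * ‖u - x‖ := by
      have := neg_abs_le (⟪g - G, u - x⟫ : ℝ)
      linarith
    nlinarith [norm_nonneg (g - G)]
  -- key inequality: η * ⟪g, u - x⟫ ≤ (D + η‖g‖) * N
  have hVIu := hVI u hu
  have hexp : ⟪(x + η • g) - xplus, u - xplus⟫
      = ⟪x - xplus, u - xplus⟫ + η * ⟪g, u - xplus⟫ := by
    rw [add_sub_right_comm, inner_add_left, real_inner_smul_left]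
  have hsplit : ⟪g, u - xplus⟫ = ⟪g, u - x⟫ - ⟪g, xplus - x⟫ := by
    rw [← inner_sub_right]
    congr 1
    abel
  have f3 : -(N * D) ≤ ⟪x - xplus, u - xplus⟫ := by
    have h := abs_real_inner_le_norm (x - xplus) (u - xplus)
    have h1' : ‖x - xplus‖ = N := by rw [hN, ← norm_neg]; congr 1; abel
    have h2' : ‖u - xplus‖ ≤ D := hD u hu xplus hxp
    have h3 := neg_abs_le (⟪x - xplus, u - xplus⟫ : ℝ)
    rw [h1'] at h
    nlinarith [hN ▸ norm_nonneg (xplus - x)]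
  have f4 : ⟪g, xplus - x⟫ ≤ ‖g‖ * N := by
    have h := le_abs_self (⟪g, xplus - x⟫ : ℝ)
    have := abs_real_inner_le_norm g (xplus - x)
    linarith
  have key : η * ⟪g, u - x⟫ ≤ (D + η * ‖g‖) * N := by
    rw [hexp, hsplit] at hVIu
    nlinarith
  have hrhs : (D + η * ‖g‖) * ((1 / η) * N) = ((D + η * ‖g‖) * N) / η := by
    field_simp
  rw [h1, hrhs]
  have : ⟪g, u - x⟫ ≤ ((D + η * ‖g‖) * N) / η := by
    rw [div_eq_inv_mul, ← mul_le_mul_iff_right₀ hη]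
    calc η * ⟪g, u - x⟫ ≤ (D + η * ‖g‖) * N := key
    _ = η * (η⁻¹ * ((D + η * ‖g‖) * N)) := by field_simp
  linarith
end

section
/- Let X ⊆ E be a nonempty closed convex set, Φ : E → ℝ differentiable with ∇Φ L-Lipschitz on X for some L > 0, and 0 < η ≤ 1/L. Let x ∈ X, let g ∈ E with ‖g − ∇Φ(x)‖ ≤ δ, and let x⁺ ∈ X satisfy the projection variational inequality for y := x + ηg: ⟨y − x⁺, z − x⁺⟩ ≤ 0 for all z ∈ X. Then the one-step Lyapunov lower bound under direction error holds: Φ(x⁺) ≥ Φ(x) + (1/(4η))‖x⁺ − x‖² − ηδ². -/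
open RealInnerProductSpace

/-- One-step Lyapunov lower bound under direction error: if `‖g − ∇Φ(x)‖ ≤ δ`,
`0 < η ≤ 1/L`, and `x⁺` is the projection of `x + ηg` onto `X`, then
`Φ(x⁺) ≥ Φ(x) + (1/(4η))‖x⁺ − x‖² − ηδ²`. -/
theorem stmt_17 {d : ℕ} (X : Set (EuclideanSpace ℝ (Fin d)))
    (hne : X.Nonempty) (hcl : IsClosed X) (hconv : Convex ℝ X)
    (Φ : EuclideanSpace ℝ (Fin d) → ℝ) (hΦ : Differentiable ℝ Φ)
    (L : ℝ) (hL : 0 < L)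
    (hlip : ∀ a ∈ X, ∀ b ∈ X, ‖gradient Φ a - gradient Φ b‖ ≤ L * ‖a - b‖)
    (η : ℝ) (hη0 : 0 < η) (hη : η ≤ 1 / L)
    (x : EuclideanSpace ℝ (Fin d)) (hx : x ∈ X)
    (g : EuclideanSpace ℝ (Fin d)) (δ : ℝ) (hg : ‖g - gradient Φ x‖ ≤ δ)
    (xplus : EuclideanSpace ℝ (Fin d)) (hxp : xplus ∈ X)
    (hVI : ∀ z ∈ X, ⟪(x + η • g) - xplus, z - xplus⟫ ≤ 0) :
    Φ x + (1 / (4 * η)) * ‖xplus - x‖ ^ 2 - η * δ ^ 2 ≤ Φ xplus := by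
  set s : EuclideanSpace ℝ (Fin d) := xplus - x with hs
  -- curve membership
  have hmem : ∀ t : ℝ, t ∈ Set.Icc (0:ℝ) 1 → x + t • s ∈ X := by
    intro t ht
    have h := hconv hx hxp (by linarith [ht.2] : (0:ℝ) ≤ 1 - t) ht.1 (by ring)
    have : (1 - t) • x + t • xplus = x + t • s := by
      rw [hs, smul_sub, sub_smul, one_smul]; abel
    rwa [this] at h
  -- derivative of the auxiliary function
  have hHd : ∀ t : ℝ, HasDerivAt
      (fun t : ℝ => Φ (x + t • s) - t * ⟪gradient Φ x, s⟫ + L * ‖s‖ ^ 2 / 2 * t ^ 2)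
      (⟪gradient Φ (x + t • s), s⟫ - ⟪gradient Φ x, s⟫ + L * ‖s‖ ^ 2 * t) t := by
    intro t
    have hcurve : HasDerivAt (fun t : ℝ => x + t • s) s t := by
      simpa using ((hasDerivAt_id t).smul_const s).const_add x
    have hcomp := ((hΦ (x + t • s)).hasGradientAt.hasFDerivAt.comp_hasDerivAt t hcurve)
    have hcomp' : HasDerivAt (fun t : ℝ => Φ (x + t • s)) ⟪gradient Φ (x + t • s), s⟫ t := by
      simpa [InnerProductSpace.toDual_apply_apply, Function.comp_def] using hcomp
    have h2 : HasDerivAt (fun t : ℝ => t * ⟪gradient Φ x, s⟫) ⟪gradient Φ x, s⟫ t := by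
      simpa using (hasDerivAt_id t).mul_const ⟪gradient Φ x, s⟫
    have h3 : HasDerivAt (fun t : ℝ => L * ‖s‖ ^ 2 / 2 * t ^ 2) (L * ‖s‖ ^ 2 * t) t := by
      have := (hasDerivAt_pow 2 t).const_mul (L * ‖s‖ ^ 2 / 2)
      simpa using this.congr_deriv (by ring)
    exact (hcomp'.sub h2).add h3
  set H : ℝ → ℝ :=
    fun t : ℝ => Φ (x + t • s) - t * ⟪gradient Φ x, s⟫ + L * ‖s‖ ^ 2 / 2 * t ^ 2 with hHdef
  have hHdiff : Differentiable ℝ H := fun t => (hHd t).differentiableAt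
  have hmono : MonotoneOn H (Set.Icc (0:ℝ) 1) := by
    apply monotoneOn_of_deriv_nonneg (convex_Icc 0 1) hHdiff.continuous.continuousOn
      (hHdiff.differentiableOn)
    intro t ht
    rw [interior_Icc] at ht
    rw [(hHd t).deriv]
    have htX : x + t • s ∈ X := hmem t ⟨le_of_lt ht.1, le_of_lt ht.2⟩
    have hcs : ⟪gradient Φ x - gradient Φ (x + t • s), s⟫ ≤
        ‖gradient Φ x - gradient Φ (x + t • s)‖ * ‖s‖ := real_inner_le_norm _ _
    have hlipXt : ‖gradient Φ x - gradient Φ (x + t • s)‖ ≤ L * (t * ‖s‖) := by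
      have := hlip x hx (x + t • s) htX
      have hnorm : ‖x - (x + t • s)‖ = t * ‖s‖ := by
        rw [show x - (x + t • s) = -(t • s) by abel, norm_neg, norm_smul,
          Real.norm_eq_abs, abs_of_pos ht.1]
      rw [hnorm] at this
      linarith
    have hsub : ⟪gradient Φ x - gradient Φ (x + t • s), s⟫ =
        ⟪gradient Φ x, s⟫ - ⟪gradient Φ (x + t • s), s⟫ := inner_sub_left _ _ _
    nlinarith [norm_nonneg s, mul_nonneg (mul_nonneg hL.le (le_of_lt ht.1)) (norm_nonneg s),
      mul_le_mul_of_nonneg_right hlipXt (norm_nonneg s)]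
  have hH01 : H 0 ≤ H 1 :=
    hmono (Set.left_mem_Icc.mpr zero_le_one) (Set.right_mem_Icc.mpr zero_le_one) zero_le_one
  have hH0 : H 0 = Φ x := by simp [hHdef]
  have hH1 : H 1 = Φ xplus - ⟪gradient Φ x, s⟫ + L * ‖s‖ ^ 2 / 2 := by
    simp [hHdef, hs]
  -- descent lemma
  have hdesc : Φ x + ⟪gradient Φ x, s⟫ - L * ‖s‖ ^ 2 / 2 ≤ Φ xplus := by
    rw [hH0, hH1] at hH01; linarith
  -- VI at z = x
  have hvi := hVI x hx
  have hviq : ‖s‖ ^ 2 ≤ η * ⟪g, s⟫ := by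
    have hexp : ⟪(x + η • g) - xplus, x - xplus⟫ = ‖s‖ ^ 2 - η * ⟪g, s⟫ := by
      have h1 : (x + η • g) - xplus = η • g - s := by rw [hs]; abel
      have h2 : x - xplus = -s := by rw [hs]; abel
      rw [h1, h2, inner_sub_left, inner_neg_right, inner_neg_right, inner_smul_left,
        real_inner_self_eq_norm_sq, starRingEnd_apply, star_trivial]
      ring
    rw [hexp] at hvi; linarith
  -- Cauchy-Schwarz for error
  have herr : ⟪g - gradient Φ x, s⟫ ≤ δ * ‖s‖ := by
    calc ⟪g - gradient Φ x, s⟫ ≤ ‖g - gradient Φ x‖ * ‖s‖ := real_inner_le_norm _ _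
      _ ≤ δ * ‖s‖ := mul_le_mul_of_nonneg_right hg (norm_nonneg s)
  have hsplit : ⟪gradient Φ x, s⟫ = ⟪g, s⟫ - ⟪g - gradient Φ x, s⟫ := by
    rw [inner_sub_left]; ring
  have hLη : L * η ≤ 1 := by
    rw [le_div_iff₀ hL] at hη; linarith
  have hδ0 : 0 ≤ δ := le_trans (norm_nonneg _) hg
  -- combine
  have hgs : ⟪g, s⟫ ≥ ‖s‖ ^ 2 / η := by
    rw [ge_iff_le, div_le_iff₀ hη0]; nlinarith
  have hd1 : L * ‖s‖ ^ 2 / 2 ≤ ‖s‖ ^ 2 / (2 * η) := by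
    rw [div_le_div_iff₀ (by norm_num) (by positivity)]
    nlinarith [sq_nonneg ‖s‖]
  have hd2 : δ * ‖s‖ ≤ η * δ ^ 2 + ‖s‖ ^ 2 / (4 * η) := by
    rw [← sub_nonneg]
    have h := sq_nonneg (‖s‖ - 2 * η * δ)
    have : η * δ ^ 2 + ‖s‖ ^ 2 / (4 * η) - δ * ‖s‖ = (‖s‖ - 2 * η * δ) ^ 2 / (4 * η) := by
      field_simp; ring
    rw [this]; positivity
  have hfin : 1 / (4 * η) * ‖s‖ ^ 2 =
      ‖s‖ ^ 2 / η - ‖s‖ ^ 2 / (4 * η) - ‖s‖ ^ 2 / (2 * η) := by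
    field_simp; ring
  linarith
end
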